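/- Let N ≥ 2 and let K be the Metropolis–Hastings kernel on simple graphs on Fin N built from a weight w (arising from edge probabilities p with 0 < p e < 1) and selection probability δ = 2/(N(N−1)). Then the chain restricted to connected graphs is irreducible: for any two connected simple graphs G and H on Fin N, there exists a positive integer k such that the (G,H) entry of the k-th matrix power K^k is strictly positive. -/

import Mathlib

open Classical

noncomputable section

/-- Weight of a simple graph `G` on `Fin N`: product over all non-diagonal unordered
pairs `e` of `p e` if `e` is an edge of `G`, and `1 - p e` otherwise. -/
def graphWeight {N : ℕ} (p : Sym2 (Fin N) → ℝ) (G : SimpleGraph (Fin N)) : ℝ :=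
  ∏ e ∈ Finset.univ.filter (fun e : Sym2 (Fin N) => ¬ e.IsDiag),
    (if e ∈ G.edgeSet then p e else 1 - p e)

/-- `G` and `H` have edge sets differing in exactly one unordered pair. -/
def differByOneEdge {N : ℕ} (G H : SimpleGraph (Fin N)) : Prop :=
  ∃ e : Sym2 (Fin N), symmDiff G.edgeSet H.edgeSet = {e}

/-- Off-diagonal part of the Metropolis–Hastings kernel: for `G ≠ H` differing in exactly
one pair, it is `δ * min 1 (w H / w G)` if `H` is connected and `0` otherwise; it is `0`
for all other pairs. -/
def mhOff {N : ℕ} (p : Sym2 (Fin N) → ℝ) (δ : ℝ) (G H : SimpleGraph (Fin N)) : ℝ :=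
  if differByOneEdge G H ∧ H.Connected then δ * min 1 (graphWeight p H / graphWeight p G)
  else 0

/-- The Metropolis–Hastings kernel `K`. -/
def mhKernel {N : ℕ} (p : Sym2 (Fin N) → ℝ) (δ : ℝ) (G H : SimpleGraph (Fin N)) : ℝ :=
  if G = H then 1 - ∑ H' ∈ Finset.univ.filter (fun H' => H' ≠ G), mhOff p δ G H'
  else mhOff p δ G H

/-- Target distribution: `π G = w G / Z` for connected `G` and `0` otherwise, where
`Z` is the sum of weights of connected graphs. -/
def mhTarget {N : ℕ} (p : Sym2 (Fin N) → ℝ) (G : SimpleGraph (Fin N)) : ℝ :=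
  if G.Connected then
    graphWeight p G /
      ∑ G' ∈ Finset.univ.filter (fun G' : SimpleGraph (Fin N) => G'.Connected),
        graphWeight p G'
  else 0


/-- The Metropolis–Hastings kernel viewed as a matrix indexed by simple graphs. -/
def mhMatrix {N : ℕ} (p : Sym2 (Fin N) → ℝ) (δ : ℝ) :
    Matrix (SimpleGraph (Fin N)) (SimpleGraph (Fin N)) ℝ :=
  fun G H => mhKernel p δ G H

section AuxMH

variable {N : ℕ} {p : Sym2 (Fin N) → ℝ}

lemma graphWeight_pos (hp : ∀ e : Sym2 (Fin N), ¬ e.IsDiag → 0 < p e ∧ p e < 1)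
    (G : SimpleGraph (Fin N)) : 0 < graphWeight p G := by
  apply Finset.prod_pos
  intro e he
  simp only [Finset.mem_filter] at he
  obtain ⟨h1, h2⟩ := hp e he.2
  split <;> linarith

lemma mhOff_nonneg (hp : ∀ e : Sym2 (Fin N), ¬ e.IsDiag → 0 < p e ∧ p e < 1)
    {δ : ℝ} (hδ : 0 ≤ δ) (G H : SimpleGraph (Fin N)) : 0 ≤ mhOff p δ G H := by
  unfold mhOff
  split
  · exact mul_nonneg hδ (le_min one_pos.le
      (div_nonneg (graphWeight_pos hp H).le (graphWeight_pos hp G).le))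
  · exact le_refl _

lemma mhOff_pos (hp : ∀ e : Sym2 (Fin N), ¬ e.IsDiag → 0 < p e ∧ p e < 1)
    {δ : ℝ} (hδ : 0 < δ) {G H : SimpleGraph (Fin N)}
    (hd : differByOneEdge G H) (hH : H.Connected) : 0 < mhOff p δ G H := by
  unfold mhOff
  rw [if_pos ⟨hd, hH⟩]
  exact mul_pos hδ (lt_min one_pos
    (div_pos (graphWeight_pos hp H) (graphWeight_pos hp G)))

lemma mhOff_eq_zero {δ : ℝ} {G H : SimpleGraph (Fin N)}
    (h : ¬ (differByOneEdge G H ∧ H.Connected)) : mhOff p δ G H = 0 := if_neg h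

/-- The key counting bound. -/
lemma sum_mhOff_le_one (hN : 2 ≤ N)
    (hp : ∀ e : Sym2 (Fin N), ¬ e.IsDiag → 0 < p e ∧ p e < 1)
    (G : SimpleGraph (Fin N)) :
    ∑ H' ∈ Finset.univ.filter (fun H' => H' ≠ G), mhOff p (2 / (N * (N - 1))) G H' ≤ 1 := by
  set δ : ℝ := 2 / (N * (N - 1)) with hδdef
  have hN1 : (2:ℝ) ≤ (N:ℝ) := by exact_mod_cast hN
  have hNN : (0:ℝ) < (N:ℝ) * ((N:ℝ) - 1) := by nlinarith
  have hδ : 0 < δ := by positivity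
  have hstep : ∀ H' ∈ Finset.univ.filter (fun H' => H' ≠ G),
      mhOff p δ G H' ≤ if differByOneEdge G H' ∧ H'.Connected then δ else 0 := by
    intro H' _
    unfold mhOff
    split
    · calc δ * min 1 (graphWeight p H' / graphWeight p G) ≤ δ * 1 :=
        mul_le_mul_of_nonneg_left (min_le_left _ _) hδ.le
      _ = δ := mul_one δ
    · exact le_refl _
  calc ∑ H' ∈ Finset.univ.filter (fun H' => H' ≠ G), mhOff p δ G H'
      ≤ ∑ H' ∈ Finset.univ.filter (fun H' => H' ≠ G),
          (if differByOneEdge G H' ∧ H'.Connected then δ else 0) :=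
        Finset.sum_le_sum hstep
    _ = ∑ H' ∈ (Finset.univ.filter (fun H' => H' ≠ G)).filter
          (fun H' => differByOneEdge G H' ∧ H'.Connected), δ :=
        (Finset.sum_filter _ _).symm
    _ = ((Finset.univ.filter (fun H' => H' ≠ G)).filter
          (fun H' => differByOneEdge G H' ∧ H'.Connected)).card • δ := by
        rw [Finset.sum_const]
    _ ≤ (N.choose 2 : ℝ) * δ := by
        rw [nsmul_eq_mul]
        apply mul_le_mul_of_nonneg_right _ hδ.le
        have hcard : ((Finset.univ.filter (fun H' => H' ≠ G)).filter
            (fun H' => differByOneEdge G H' ∧ H'.Connected)).card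
            ≤ (⊤ : SimpleGraph (Fin N)).edgeFinset.card := by
          apply Finset.card_le_card_of_injOn
            (fun H' => if h : differByOneEdge G H' then h.choose else Sym2.mk (⟨0, by omega⟩ : Fin N) (⟨0, by omega⟩ : Fin N))
          · intro H' hH'
            simp only [Finset.mem_coe, Finset.mem_filter] at hH'
            obtain ⟨_, hd, _⟩ := hH'
            dsimp only
            rw [dif_pos hd]
            have hspec := hd.choose_spec
            have hmem : hd.choose ∈ symmDiff G.edgeSet H'.edgeSet :=
              (Set.ext_iff.mp hspec hd.choose).mpr rfl
            rw [Set.mem_symmDiff] at hmem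
            have : ¬ (hd.choose).IsDiag := by
              rcases hmem with ⟨h1, _⟩ | ⟨h1, _⟩
              · exact SimpleGraph.not_isDiag_of_mem_edgeSet _ h1
              · exact SimpleGraph.not_isDiag_of_mem_edgeSet _ h1
            rw [Finset.mem_coe, SimpleGraph.mem_edgeFinset, SimpleGraph.edgeSet_top]
            exact this
          · intro H1 h1 H2 h2 heq
            simp only [Finset.coe_filter, Set.mem_setOf_eq, Finset.mem_filter,
              Finset.mem_univ, true_and] at h1 h2
            obtain ⟨_, hd1, _⟩ := h1
            obtain ⟨_, hd2, _⟩ := h2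
            simp only [dif_pos hd1, dif_pos hd2] at heq
            have e1 := hd1.choose_spec
            have e2 := hd2.choose_spec
            rw [heq] at e1
            apply SimpleGraph.edgeSet_injective
            have k1 : H1.edgeSet = symmDiff G.edgeSet {hd2.choose} := by
              rw [← e1, symmDiff_symmDiff_cancel_left]
            have k2 : H2.edgeSet = symmDiff G.edgeSet {hd2.choose} := by
              rw [← e2, symmDiff_symmDiff_cancel_left]
            rw [k1]; exact k2.symm
        calc (((Finset.univ.filter (fun H' => H' ≠ G)).filter
              (fun H' => differByOneEdge G H' ∧ H'.Connected)).card : ℝ)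
            ≤ ((⊤ : SimpleGraph (Fin N)).edgeFinset.card : ℝ) := by exact_mod_cast hcard
          _ = (N.choose 2 : ℝ) := by
              rw [SimpleGraph.card_edgeFinset_top_eq_card_choose_two, Fintype.card_fin]
    _ = 1 := by
        rw [Nat.cast_choose_two, hδdef]
        have h0 : ((N:ℝ) * ((N:ℝ) - 1)) ≠ 0 := ne_of_gt hNN
        have h1 : (N:ℝ) - 1 ≠ 0 := (by linarith : (0:ℝ) < (N:ℝ) - 1).ne'
        field_simp
        try ring

lemma mhKernel_nonneg (hN : 2 ≤ N)
    (hp : ∀ e : Sym2 (Fin N), ¬ e.IsDiag → 0 < p e ∧ p e < 1)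
    (G H : SimpleGraph (Fin N)) : 0 ≤ mhKernel p (2 / (N * (N - 1))) G H := by
  have hN1 : (2:ℝ) ≤ (N:ℝ) := by exact_mod_cast hN
  have hδ : (0:ℝ) < 2 / (N * (N - 1)) := by
    apply div_pos two_pos; nlinarith
  unfold mhKernel
  split
  · linarith [sum_mhOff_le_one hN hp G]
  · exact mhOff_nonneg hp hδ.le G H

lemma mhKernel_pos_of (hN : 2 ≤ N)
    (hp : ∀ e : Sym2 (Fin N), ¬ e.IsDiag → 0 < p e ∧ p e < 1)
    {G H : SimpleGraph (Fin N)} (hGH : G ≠ H)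
    (hd : differByOneEdge G H) (hH : H.Connected) :
    0 < mhKernel p (2 / (N * (N - 1))) G H := by
  have hN1 : (2:ℝ) ≤ (N:ℝ) := by exact_mod_cast hN
  have hδ : (0:ℝ) < 2 / (N * (N - 1)) := by
    apply div_pos two_pos; nlinarith
  unfold mhKernel
  rw [if_neg hGH]
  exact mhOff_pos hp hδ hd hH

lemma mhMatrix_pow_nonneg (hN : 2 ≤ N)
    (hp : ∀ e : Sym2 (Fin N), ¬ e.IsDiag → 0 < p e ∧ p e < 1)
    (k : ℕ) (G H : SimpleGraph (Fin N)) :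
    0 ≤ (mhMatrix p (2 / (N * (N - 1))) ^ k) G H := by
  induction k generalizing G H with
  | zero =>
    rw [pow_zero]
    by_cases h : G = H
    · subst h; rw [Matrix.one_apply_eq]; norm_num
    · rw [Matrix.one_apply_ne h]
  | succ n ih =>
    rw [pow_succ, Matrix.mul_apply]
    apply Finset.sum_nonneg
    intro M _
    exact mul_nonneg (ih G M) (mhKernel_nonneg hN hp M H)

lemma mhMatrix_pow_chain (hN : 2 ≤ N)
    (hp : ∀ e : Sym2 (Fin N), ¬ e.IsDiag → 0 < p e ∧ p e < 1)
    {a b : ℕ} {G M H : SimpleGraph (Fin N)}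
    (h1 : 0 < (mhMatrix p (2 / (N * (N - 1))) ^ a) G M)
    (h2 : 0 < (mhMatrix p (2 / (N * (N - 1))) ^ b) M H) :
    0 < (mhMatrix p (2 / (N * (N - 1))) ^ (a + b)) G H := by
  rw [pow_add, Matrix.mul_apply]
  have key : (mhMatrix p (2 / (N * (N - 1))) ^ a) G M *
      (mhMatrix p (2 / (N * (N - 1))) ^ b) M H ≤
      ∑ M' : SimpleGraph (Fin N), (mhMatrix p (2 / (N * (N - 1))) ^ a) G M' *
        (mhMatrix p (2 / (N * (N - 1))) ^ b) M' H := by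
    apply Finset.single_le_sum (f := fun M' => (mhMatrix p (2 / (N * (N - 1))) ^ a) G M' *
        (mhMatrix p (2 / (N * (N - 1))) ^ b) M' H)
      (fun i _ => mul_nonneg (mhMatrix_pow_nonneg hN hp a G i)
        (mhMatrix_pow_nonneg hN hp b i H)) (Finset.mem_univ M)
  calc (0:ℝ) < _ := mul_pos h1 h2
    _ ≤ _ := key

/-- Adding one non-edge gives a graph differing by one edge. -/
lemma addEdge_facts {G : SimpleGraph (Fin N)} {e : Sym2 (Fin N)}
    (he : ¬ e.IsDiag) (hne : e ∉ G.edgeSet) :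
    (G ⊔ SimpleGraph.fromEdgeSet {e}).edgeSet = insert e G.edgeSet ∧
    differByOneEdge G (G ⊔ SimpleGraph.fromEdgeSet {e}) ∧
    differByOneEdge (G ⊔ SimpleGraph.fromEdgeSet {e}) G ∧
    G ≠ G ⊔ SimpleGraph.fromEdgeSet {e} := by
  have hES : (G ⊔ SimpleGraph.fromEdgeSet {e}).edgeSet = insert e G.edgeSet := by
    rw [SimpleGraph.edgeSet_sup, SimpleGraph.edgeSet_fromEdgeSet]
    ext x
    simp only [Set.mem_union, Set.mem_diff, Set.mem_singleton_iff, Set.mem_setOf_eq,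
      Set.mem_insert_iff]
    constructor
    · rintro (h | ⟨rfl, _⟩)
      · exact Or.inr h
      · exact Or.inl rfl
    · rintro (rfl | h)
      · exact Or.inr ⟨rfl, he⟩
      · exact Or.inl h
  have hsd : symmDiff G.edgeSet (G ⊔ SimpleGraph.fromEdgeSet {e}).edgeSet = {e} := by
    rw [hES]
    ext x
    rw [Set.mem_symmDiff]
    simp only [Set.mem_insert_iff, Set.mem_singleton_iff]
    constructor
    · rintro (⟨h1, h2⟩ | ⟨h1, h2⟩)
      · exact absurd (Or.inr h1) h2
      · rcases h1 with rfl | h1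
        · rfl
        · exact absurd h1 h2
    · rintro rfl
      exact Or.inr ⟨Or.inl rfl, hne⟩
  refine ⟨hES, ⟨e, hsd⟩, ⟨e, by rw [symmDiff_comm]; exact hsd⟩, ?_⟩
  intro h
  rw [← h] at hES
  exact hne (hES ▸ Set.mem_insert e G.edgeSet)

/-- From any connected graph we can reach ⊤. -/
lemma reach_top (hN : 2 ≤ N)
    (hp : ∀ e : Sym2 (Fin N), ¬ e.IsDiag → 0 < p e ∧ p e < 1) :
    ∀ n : ℕ, ∀ G : SimpleGraph (Fin N), G.Connected →
      ((⊤ : SimpleGraph (Fin N)).edgeFinset \ G.edgeFinset).card = n →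
      ∃ k, 0 < (mhMatrix p (2 / (N * (N - 1))) ^ k) G ⊤ ∧ (G ≠ ⊤ → 0 < k) := by
  intro n
  induction n with
  | zero =>
    intro G hG hcard
    have hsub : (⊤ : SimpleGraph (Fin N)).edgeFinset ⊆ G.edgeFinset :=
      Finset.sdiff_eq_empty_iff_subset.mp (Finset.card_eq_zero.mp hcard)
    have hle : (⊤ : SimpleGraph (Fin N)) ≤ G := by
      rw [← SimpleGraph.edgeSet_subset_edgeSet]
      intro e he
      have := hsub (SimpleGraph.mem_edgeFinset.mpr he)
      exact SimpleGraph.mem_edgeFinset.mp this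
    have hGt : G = ⊤ := top_le_iff.mp hle
    subst hGt
    exact ⟨0, by rw [pow_zero, Matrix.one_apply_eq]; norm_num, fun h => absurd rfl h⟩
  | succ n ih =>
    intro G hG hcard
    have hne : ((⊤ : SimpleGraph (Fin N)).edgeFinset \ G.edgeFinset).Nonempty := by
      rw [← Finset.card_pos, hcard]; omega
    obtain ⟨e, he⟩ := hne
    rw [Finset.mem_sdiff, SimpleGraph.mem_edgeFinset, SimpleGraph.mem_edgeFinset] at he
    obtain ⟨het, hneG⟩ := he
    have hediag : ¬ e.IsDiag := by
      rw [SimpleGraph.edgeSet_top] at het; exact het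
    set G' := G ⊔ SimpleGraph.fromEdgeSet {e} with hG'
    obtain ⟨hES, hd1, hd2, hneq⟩ := addEdge_facts hediag hneG
    have hG'conn : G'.Connected := hG.mono le_sup_left
    have hEF : ∀ inst : Fintype (G ⊔ SimpleGraph.fromEdgeSet {e}).edgeSet,
        @SimpleGraph.edgeFinset _ _ inst = insert e G.edgeFinset := by
      intro inst
      ext x
      simp only [SimpleGraph.mem_edgeFinset, hES, Set.mem_insert_iff, Finset.mem_insert]
    have hmem : e ∈ (⊤ : SimpleGraph (Fin N)).edgeFinset \ G.edgeFinset := by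
      rw [Finset.mem_sdiff, SimpleGraph.mem_edgeFinset, SimpleGraph.mem_edgeFinset]
      exact ⟨het, hneG⟩
    obtain ⟨k, hk, _⟩ := ih G' hG'conn
      (by rw [hEF _, Finset.sdiff_insert, Finset.card_erase_of_mem hmem, hcard]; omega)
    refine ⟨1 + k, ?_, fun _ => by omega⟩
    have h1 : 0 < (mhMatrix p (2 / (N * (N - 1))) ^ 1) G G' := by
      rw [pow_one]
      exact mhKernel_pos_of hN hp hneq hd1 hG'conn
    exact mhMatrix_pow_chain hN hp h1 hk

/-- From ⊤ we can reach any connected graph. -/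
lemma top_reach (hN : 2 ≤ N)
    (hp : ∀ e : Sym2 (Fin N), ¬ e.IsDiag → 0 < p e ∧ p e < 1) :
    ∀ n : ℕ, ∀ H : SimpleGraph (Fin N), H.Connected →
      ((⊤ : SimpleGraph (Fin N)).edgeFinset \ H.edgeFinset).card = n →
      ∃ k, 0 < (mhMatrix p (2 / (N * (N - 1))) ^ k) ⊤ H ∧ (H ≠ ⊤ → 0 < k) := by
  intro n
  induction n with
  | zero =>
    intro H hH hcard
    have hsub : (⊤ : SimpleGraph (Fin N)).edgeFinset ⊆ H.edgeFinset :=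
      Finset.sdiff_eq_empty_iff_subset.mp (Finset.card_eq_zero.mp hcard)
    have hle : (⊤ : SimpleGraph (Fin N)) ≤ H := by
      rw [← SimpleGraph.edgeSet_subset_edgeSet]
      intro e he
      exact SimpleGraph.mem_edgeFinset.mp (hsub (SimpleGraph.mem_edgeFinset.mpr he))
    have hHt : H = ⊤ := top_le_iff.mp hle
    subst hHt
    exact ⟨0, by rw [pow_zero, Matrix.one_apply_eq]; norm_num, fun h => absurd rfl h⟩
  | succ n ih =>
    intro H hH hcard
    have hne : ((⊤ : SimpleGraph (Fin N)).edgeFinset \ H.edgeFinset).Nonempty := by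
      rw [← Finset.card_pos, hcard]; omega
    obtain ⟨e, he⟩ := hne
    rw [Finset.mem_sdiff, SimpleGraph.mem_edgeFinset, SimpleGraph.mem_edgeFinset] at he
    obtain ⟨het, hneH⟩ := he
    have hediag : ¬ e.IsDiag := by
      rw [SimpleGraph.edgeSet_top] at het; exact het
    set H' := H ⊔ SimpleGraph.fromEdgeSet {e} with hH'
    obtain ⟨hES, hd1, hd2, hneq⟩ := addEdge_facts hediag hneH
    have hH'conn : H'.Connected := hH.mono le_sup_left
    have hEF : ∀ inst : Fintype (H ⊔ SimpleGraph.fromEdgeSet {e}).edgeSet,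
        @SimpleGraph.edgeFinset _ _ inst = insert e H.edgeFinset := by
      intro inst
      ext x
      simp only [SimpleGraph.mem_edgeFinset, hES, Set.mem_insert_iff, Finset.mem_insert]
    have hmem : e ∈ (⊤ : SimpleGraph (Fin N)).edgeFinset \ H.edgeFinset := by
      rw [Finset.mem_sdiff, SimpleGraph.mem_edgeFinset, SimpleGraph.mem_edgeFinset]
      exact ⟨het, hneH⟩
    obtain ⟨k, hk, _⟩ := ih H' hH'conn
      (by rw [hEF _, Finset.sdiff_insert, Finset.card_erase_of_mem hmem, hcard]; omega)
    refine ⟨k + 1, ?_, fun _ => by omega⟩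
    have h1 : 0 < (mhMatrix p (2 / (N * (N - 1))) ^ 1) H' H := by
      rw [pow_one]
      exact mhKernel_pos_of hN hp hneq.symm hd2 hH
    exact mhMatrix_pow_chain hN hp hk h1

end AuxMH

/-- Irreducibility of the Metropolis–Hastings chain on connected graphs: for any two
connected simple graphs `G` and `H` on `Fin N`, some positive power of the kernel
matrix has a strictly positive `(G, H)` entry. -/
theorem mh_irreducible {N : ℕ} (hN : 2 ≤ N) (p : Sym2 (Fin N) → ℝ)
    (hp : ∀ e : Sym2 (Fin N), ¬ e.IsDiag → 0 < p e ∧ p e < 1)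
    (G H : SimpleGraph (Fin N)) (hG : G.Connected) (hH : H.Connected) :
    ∃ k : ℕ, 0 < k ∧ 0 < (mhMatrix p (2 / (N * (N - 1))) ^ k) G H := by
  have hN1 : (2:ℝ) ≤ (N:ℝ) := by exact_mod_cast hN
  have hδ : (0:ℝ) < 2 / (N * (N - 1)) := by
    apply div_pos two_pos; nlinarith
  by_cases hGH : G = H
  · subst hGH
    by_cases hs : ∑ H' ∈ Finset.univ.filter (fun H' => H' ≠ G),
        mhOff p (2 / (N * (N - 1))) G H' < 1
    · refine ⟨1, one_pos, ?_⟩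
      rw [pow_one]
      show 0 < mhKernel p (2 / (N * (N - 1))) G G
      unfold mhKernel
      rw [if_pos rfl]
      linarith
    · push_neg at hs
      have hsum_pos : 0 < ∑ H' ∈ Finset.univ.filter (fun H' => H' ≠ G),
          mhOff p (2 / (N * (N - 1))) G H' := lt_of_lt_of_le one_pos hs
      have : ∃ H' ∈ Finset.univ.filter (fun H' => H' ≠ G),
          0 < mhOff p (2 / (N * (N - 1))) G H' := by
        by_contra hcon
        push_neg at hcon
        have : ∑ H' ∈ Finset.univ.filter (fun H' => H' ≠ G),
            mhOff p (2 / (N * (N - 1))) G H' ≤ 0 :=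
          Finset.sum_nonpos hcon
        linarith
      obtain ⟨H', hH'mem, hH'pos⟩ := this
      rw [Finset.mem_filter] at hH'mem
      have hcond : differByOneEdge G H' ∧ H'.Connected := by
        by_contra hcon
        rw [mhOff_eq_zero hcon] at hH'pos
        exact lt_irrefl 0 hH'pos
      obtain ⟨hd, hH'conn⟩ := hcond
      refine ⟨2, two_pos, ?_⟩
      have h1 : 0 < (mhMatrix p (2 / (N * (N - 1))) ^ 1) G H' := by
        rw [pow_one]
        exact mhKernel_pos_of hN hp (Ne.symm hH'mem.2) hd hH'conn
      have h2 : 0 < (mhMatrix p (2 / (N * (N - 1))) ^ 1) H' G := by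
        rw [pow_one]
        refine mhKernel_pos_of hN hp hH'mem.2 ?_ hG
        obtain ⟨e, he⟩ := hd
        exact ⟨e, by rw [symmDiff_comm]; exact he⟩
      exact mhMatrix_pow_chain hN hp h1 h2
  · obtain ⟨a, ha, ha'⟩ := reach_top hN hp _ G hG rfl
    obtain ⟨b, hb, hb'⟩ := top_reach hN hp _ H hH rfl
    refine ⟨a + b, ?_, mhMatrix_pow_chain hN hp ha hb⟩
    by_contra hab
    push_neg at hab
    have ha0 : a = 0 := by omega
    have hb0 : b = 0 := by omega
    subst ha0; subst hb0
    have hGt : G = ⊤ := by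
      by_contra h
      rw [pow_zero, Matrix.one_apply_ne h] at ha
      exact lt_irrefl 0 ha
    have hHt : H = ⊤ := by
      by_contra h
      rw [pow_zero] at hb
      rw [Matrix.one_apply_ne (Ne.symm h)] at hb
      exact lt_irrefl 0 hb
    exact hGH (hGt.trans hHt.symm)

end
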